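/- Let A be a subfield of a field B and let T = A + X·B[X]. Then every prime ideal of T different from the ideal X·B[X] (the ideal of T consisting of all polynomials with zero constant coefficient) is a principal ideal of T. -/
import Mathlib


/-- The polynomial composite `A + X·B[X]`: the subring of `B[X]` of polynomials
whose constant coefficient lies in `A`. -/
def Subring.composite {B : Type*} [CommRing B] (A : Subring B) : Subring (Polynomial B) where
  carrier := {f : Polynomial B | f.coeff 0 ∈ A}
  mul_mem' {f g} hf hg := by
    simp only [Set.mem_setOf_eq, Polynomial.mul_coeff_zero] at *
    exact mul_mem hf hg
  one_mem' := by
    simp only [Set.mem_setOf_eq, Polynomial.coeff_one_zero]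
    exact one_mem A
  add_mem' {f g} hf hg := by
    simp only [Set.mem_setOf_eq, Polynomial.coeff_add] at *
    exact add_mem hf hg
  zero_mem' := by
    simp only [Set.mem_setOf_eq, Polynomial.coeff_zero]
    exact zero_mem A
  neg_mem' {f} hf := by
    simp only [Set.mem_setOf_eq, Polynomial.coeff_neg] at *
    exact neg_mem hf

theorem Subring.mem_composite {B : Type*} [CommRing B] (A : Subring B) (f : Polynomial B) :
    f ∈ A.composite ↔ f.coeff 0 ∈ A := Iff.rfl

/-- The ideal `X·B[X] = {f ∈ T : f(0) = 0}` of the composite `T = A + X·B[X]`. -/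
def Subring.compositeXIdeal {B : Type*} [CommRing B] (A : Subring B) :
    Ideal A.composite where
  carrier := {f : A.composite | (f : Polynomial B).coeff 0 = 0}
  add_mem' {f g} hf hg := by
    show ((f + g : A.composite) : Polynomial B).coeff 0 = 0
    rw [Subring.coe_add, Polynomial.coeff_add]
    simp only [Set.mem_setOf_eq] at hf hg
    rw [hf, hg, add_zero]
  zero_mem' := by
    show ((0 : A.composite) : Polynomial B).coeff 0 = 0
    rw [Subring.coe_zero, Polynomial.coeff_zero]
  smul_mem' c {f} hf := by
    show ((c * f : A.composite) : Polynomial B).coeff 0 = 0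
    rw [Subring.coe_mul, Polynomial.mul_coeff_zero]
    simp only [Set.mem_setOf_eq] at hf
    rw [hf, mul_zero]

theorem Subring.mem_compositeXIdeal {B : Type*} [CommRing B] (A : Subring B)
    (f : A.composite) :
    f ∈ A.compositeXIdeal ↔ (f : Polynomial B).coeff 0 = 0 := Iff.rfl

open Polynomial

section Aux
variable {B : Type*} [Field B] {A : Subfield B}

private lemma xt_mem (t : B[X]) : X * t ∈ A.toSubring.composite := by
  rw [Subring.mem_composite, Polynomial.mul_coeff_zero, Polynomial.coeff_X_zero, zero_mul]
  exact zero_mem _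

private lemma xmem : (X : B[X]) ∈ A.toSubring.composite := by
  rw [Subring.mem_composite, Polynomial.coeff_X_zero]
  exact zero_mem _

private lemma xmul_mem {P : Ideal A.toSubring.composite} (hP : P.IsPrime)
    (hX : (⟨X, xmem⟩ : A.toSubring.composite) ∈ P) (t : B[X]) :
    (⟨X * t, xt_mem t⟩ : A.toSubring.composite) ∈ P := by
  have h2 : (⟨X * t, xt_mem t⟩ : A.toSubring.composite) * ⟨X * t, xt_mem t⟩
      = ⟨X * (t * t), xt_mem _⟩ * ⟨X, xmem⟩ := by
    refine Subtype.ext ?_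
    push_cast
    ring
  have hm : (⟨X * t, xt_mem t⟩ : A.toSubring.composite) * ⟨X * t, xt_mem t⟩ ∈ P := by
    rw [h2]; exact Ideal.mul_mem_left _ _ hX
  rcases hP.mem_or_mem hm with h | h <;> exact h

private lemma span_xmul_mem {P : Ideal A.toSubring.composite} {y : B[X]}
    (hy : y ∈ Ideal.span (Subtype.val '' (P : Set A.toSubring.composite))) :
    ∀ z : B[X], (⟨X * (z * y), xt_mem _⟩ : A.toSubring.composite) ∈ P := by
  induction hy using Submodule.span_induction with
  | mem x h =>
      obtain ⟨p, hp, rfl⟩ := h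
      intro z
      have h1 : (⟨X * (z * p.1), xt_mem _⟩ : A.toSubring.composite)
          = (⟨X * z, xt_mem z⟩ : A.toSubring.composite) * p := by
        refine Subtype.ext ?_
        push_cast
        show X * (z * p.1) = X * z * p.1
        ring
      rw [h1]; exact Ideal.mul_mem_left _ _ hp
  | zero =>
      intro z
      have h1 : (⟨X * (z * 0), xt_mem _⟩ : A.toSubring.composite) = 0 := by
        refine Subtype.ext ?_; push_cast; ring
      rw [h1]; exact P.zero_mem
  | add x y hx hy ihx ihy =>
      intro z
      have h1 : (⟨X * (z * (x + y)), xt_mem _⟩ : A.toSubring.composite)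
          = ⟨X * (z * x), xt_mem _⟩ + ⟨X * (z * y), xt_mem _⟩ := by
        refine Subtype.ext ?_; push_cast; ring
      rw [h1]; exact P.add_mem (ihx z) (ihy z)
  | smul a x hx ih =>
      intro z
      have h1 : (⟨X * (z * (a • x)), xt_mem _⟩ : A.toSubring.composite)
          = ⟨X * ((z * a) * x), xt_mem _⟩ := by
        refine Subtype.ext ?_; push_cast [smul_eq_mul]; ring
      rw [h1]; exact ih (z * a)

private lemma X_mem_of_all_const_zero {P : Ideal A.toSubring.composite} (hP : P.IsPrime)
    (hall : ∀ g ∈ P, (g : B[X]).coeff 0 = 0) :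
    ∀ n : ℕ, ∀ g : A.toSubring.composite, g ∈ P → g ≠ 0 → (g : B[X]).natDegree ≤ n →
      (⟨X, xmem⟩ : A.toSubring.composite) ∈ P := by
  intro n
  induction n with
  | zero =>
      intro g hg hg0 hdeg
      exfalso
      apply hg0
      have h0 := hall g hg
      have h1 : (g : B[X]) = C ((g : B[X]).coeff 0) := eq_C_of_natDegree_le_zero hdeg
      exact Subtype.ext (by rw [h1, h0, map_zero]; rfl)
  | succ n ih =>
      intro g hg hg0 hdeg
      have h0 := hall g hg
      obtain ⟨t, ht⟩ := X_dvd_iff.mpr h0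
      have htne : t ≠ 0 := by
        intro h
        exact hg0 (Subtype.ext (by rw [ht, h, mul_zero]; rfl))
      by_cases hc0 : t.coeff 0 = 0
      · have htT : t ∈ A.toSubring.composite := by
          rw [Subring.mem_composite, hc0]; exact zero_mem _
        have hfact : g = (⟨X, xmem⟩ : A.toSubring.composite) * ⟨t, htT⟩ :=
          Subtype.ext (by push_cast; exact ht)
        rcases hP.mem_or_mem (hfact ▸ hg) with h | h
        · exact h
        · have ht0 : (⟨t, htT⟩ : A.toSubring.composite) ≠ 0 := by
            intro h'
            exact htne (congrArg Subtype.val h')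
          have hdt : t.natDegree ≤ n := by
            have hd : (g : B[X]).natDegree = 1 + t.natDegree := by
              rw [ht, natDegree_mul X_ne_zero htne, natDegree_X]
            omega
          exact ih ⟨t, htT⟩ h ht0 hdt
      · -- nonzero constant coefficient: squaring trick
        set c := t.coeff 0 with hc
        have hu2 : (⟨X * (C c⁻¹ * t), xt_mem _⟩ : A.toSubring.composite)
              * ⟨X * (C c⁻¹ * t), xt_mem _⟩
            = g * ⟨X * (C c⁻¹ * (C c⁻¹ * t)), xt_mem _⟩ := by
          refine Subtype.ext ?_; push_cast; rw [ht]; ring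
        have huP : (⟨X * (C c⁻¹ * t), xt_mem _⟩ : A.toSubring.composite) ∈ P := by
          rcases hP.mem_or_mem (hu2 ▸ Ideal.mul_mem_right _ _ hg) with h | h <;> exact h
        have hmem1 : C c⁻¹ * t ∈ A.toSubring.composite := by
          rw [Subring.mem_composite, coeff_C_mul, ← hc, inv_mul_cancel₀ hc0]
          exact one_mem _
        have hfact2 : (⟨X * (C c⁻¹ * t), xt_mem _⟩ : A.toSubring.composite)
            = ⟨X, xmem⟩ * ⟨C c⁻¹ * t, hmem1⟩ := Subtype.ext (by push_cast; ring)
        rcases hP.mem_or_mem (hfact2 ▸ huP) with h | h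
        · exact h
        · exfalso
          have h2 := hall _ h
          rw [coeff_C_mul, ← hc, inv_mul_cancel₀ hc0] at h2
          exact one_ne_zero h2

end Aux

/-- For `A ⊆ B` fields and `T = A + X·B[X]`, every prime ideal of `T` different from the
ideal `X·B[X]` is principal. -/
theorem composite_prime_ne_XIdeal_isPrincipal {B : Type*} [Field B] (A : Subfield B)
    (P : Ideal A.toSubring.composite) (hP : P.IsPrime)
    (hne : P ≠ A.toSubring.compositeXIdeal) :
    P.IsPrincipal := by
  classical
  by_cases hex : ∃ f ∈ P, (f : B[X]).coeff 0 ≠ 0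
  · -- main case: P contains an element with nonzero constant coefficient
    obtain ⟨f₀, hf₀P, hf₀0⟩ := hex
    set Q : Ideal B[X] :=
      Ideal.span (Subtype.val '' (P : Set A.toSubring.composite)) with hQdef
    obtain ⟨q₀, hq₀⟩ := (IsPrincipalIdealRing.principal Q).principal
    rw [Ideal.submodule_span_eq] at hq₀
    have hf₀Q : (f₀ : B[X]) ∈ Q := Ideal.subset_span ⟨f₀, hf₀P, rfl⟩
    have hq₀dvd : q₀ ∣ (f₀ : B[X]) := by
      rw [hq₀] at hf₀Q
      exact (Ideal.mem_span_singleton).mp hf₀Q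
    have hc0 : q₀.coeff 0 ≠ 0 := by
      obtain ⟨w, hw⟩ := hq₀dvd
      intro h
      apply hf₀0
      rw [hw, Polynomial.mul_coeff_zero, h, zero_mul]
    set c := q₀.coeff 0 with hc
    set q := Polynomial.C c⁻¹ * q₀ with hq
    have hq0 : q.coeff 0 = 1 := by
      rw [hq, Polynomial.coeff_C_mul, ← hc, inv_mul_cancel₀ hc0]
    have hqT : q ∈ A.toSubring.composite := by
      rw [Subring.mem_composite, hq0]; exact one_mem _
    have hq₀q : q₀ = q * Polynomial.C c := by
      rw [hq, mul_comm (Polynomial.C c⁻¹) q₀, mul_assoc, ← Polynomial.C_mul,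
        inv_mul_cancel₀ hc0, Polynomial.C_1, mul_one]
    have hdvdQ : ∀ y ∈ Q, q ∣ y := by
      intro y hy
      rw [hq₀] at hy
      exact dvd_trans ⟨Polynomial.C c, hq₀q⟩ ((Ideal.mem_span_singleton).mp hy)
    have hqQ : q ∈ Q := by
      rw [hq₀, Ideal.mem_span_singleton, hq]
      exact Dvd.intro_left _ rfl
    -- minimal degree element with nonzero constant coefficient
    set S : Set ℕ :=
      {n | ∃ g, g ∈ P ∧ (g : B[X]).coeff 0 ≠ 0 ∧ (g : B[X]).natDegree = n} with hS
    have hSne : S.Nonempty := ⟨(f₀ : B[X]).natDegree, f₀, hf₀P, hf₀0, rfl⟩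
    obtain ⟨f, hfP, hf0, hfd⟩ := Nat.sInf_mem hSne
    have hfQ : (f : B[X]) ∈ Q := Ideal.subset_span ⟨f, hfP, rfl⟩
    obtain ⟨w, hw⟩ := hdvdQ _ hfQ
    have hw0 : (f : B[X]).coeff 0 = w.coeff 0 := by
      rw [hw, Polynomial.mul_coeff_zero, hq0, one_mul]
    have hwT : w ∈ A.toSubring.composite := by
      rw [Subring.mem_composite, ← hw0]; exact f.2
    have hfact : f = (⟨q, hqT⟩ : A.toSubring.composite) * ⟨w, hwT⟩ :=
      Subtype.ext (by push_cast; exact hw)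
    by_cases hqd : q.natDegree = 0
    · -- q is the constant 1, so X ∈ P and P contains a unit: contradiction
      exfalso
      have hq1 : q = 1 := by
        have h1 := Polynomial.eq_C_of_natDegree_le_zero (le_of_eq hqd)
        rw [h1, hq0, Polynomial.C_1]
      have h1Q : (1 : B[X]) ∈ Q := hq1 ▸ hqQ
      have hXP : (⟨Polynomial.X, xmem⟩ : A.toSubring.composite) ∈ P := by
        have h2 := span_xmul_mem (P := P) (y := 1) h1Q 1
        have h3 : (⟨Polynomial.X * (1 * 1), xt_mem _⟩ : A.toSubring.composite)
            = ⟨Polynomial.X, xmem⟩ := Subtype.ext (by push_cast; ring)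
        rwa [h3] at h2
      set a := (f₀ : B[X]).coeff 0 with ha
      have haA : a ∈ A := f₀.2
      have hCa : Polynomial.C a ∈ A.toSubring.composite := by
        rw [Subring.mem_composite, Polynomial.coeff_C_zero]; exact haA
      have hsub : ((f₀ : B[X]) - Polynomial.C a).coeff 0 = 0 := by
        rw [Polynomial.coeff_sub, Polynomial.coeff_C_zero, ← ha, sub_self]
      obtain ⟨t, ht⟩ := Polynomial.X_dvd_iff.mpr hsub
      have h1 := xmul_mem hP hXP t
      have h2 : (⟨Polynomial.C a, hCa⟩ : A.toSubring.composite)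
          = f₀ - ⟨Polynomial.X * t, xt_mem t⟩ :=
        Subtype.ext (by push_cast; rw [← ht]; ring)
      have h3 : (⟨Polynomial.C a, hCa⟩ : A.toSubring.composite) ∈ P :=
        h2 ▸ P.sub_mem hf₀P h1
      have hinv : a⁻¹ ∈ A := A.inv_mem haA
      have hCinv : Polynomial.C a⁻¹ ∈ A.toSubring.composite := by
        rw [Subring.mem_composite, Polynomial.coeff_C_zero]; exact hinv
      have h1P : (1 : A.toSubring.composite) ∈ P := by
        have h4 : (1 : A.toSubring.composite)
            = (⟨Polynomial.C a, hCa⟩ : A.toSubring.composite) * ⟨Polynomial.C a⁻¹, hCinv⟩ := by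
          refine Subtype.ext ?_
          push_cast
          rw [← Polynomial.C_mul, mul_inv_cancel₀ hf₀0, Polynomial.C_1]
        rw [h4]
        exact Ideal.mul_mem_right _ _ h3
      exact hP.ne_top ((Ideal.eq_top_iff_one _).mpr h1P)
    · rcases hP.mem_or_mem (hfact ▸ hfP) with hqP | hwP
      · -- P is generated by q
        refine ⟨⟨⟨q, hqT⟩, le_antisymm ?_ ?_⟩⟩
        · intro g hg
          obtain ⟨v, hv⟩ := hdvdQ _ (Ideal.subset_span ⟨g, hg, rfl⟩)
          have hv0 : (g : B[X]).coeff 0 = v.coeff 0 := by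
            rw [hv, Polynomial.mul_coeff_zero, hq0, one_mul]
          have hvT : v ∈ A.toSubring.composite := by
            rw [Subring.mem_composite, ← hv0]; exact g.2
          rw [Ideal.submodule_span_eq, Ideal.mem_span_singleton]
          exact ⟨⟨v, hvT⟩, Subtype.ext (by push_cast; exact hv)⟩
        · rw [Ideal.submodule_span_eq, Ideal.span_le, Set.singleton_subset_iff]
          exact hqP
      · -- w ∈ P contradicts minimality of the degree of f
        exfalso
        have hwc : w.coeff 0 ≠ 0 := by rw [← hw0]; exact hf0
        have hwS : w.natDegree ∈ S := ⟨⟨w, hwT⟩, hwP, hwc, rfl⟩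
        have hle := Nat.sInf_le hwS
        have hqne : q ≠ 0 := fun h => by
          rw [h, Polynomial.coeff_zero] at hq0; exact zero_ne_one hq0
        have hwne : w ≠ 0 := fun h => by
          rw [h, Polynomial.coeff_zero] at hwc; exact hwc rfl
        have hdeg : (f : B[X]).natDegree = q.natDegree + w.natDegree := by
          rw [hw, Polynomial.natDegree_mul hqne hwne]
        omega
  · -- no element of P has nonzero constant coefficient: P = ⊥
    push_neg at hex
    by_cases hbot : ∀ g ∈ P, g = 0
    · have hPbot : P = ⊥ := by
        ext g
        rw [Ideal.mem_bot]
        exact ⟨fun h => hbot g h, fun h => h ▸ P.zero_mem⟩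
      rw [hPbot]
      exact ⟨⟨0, (Ideal.span_zero).symm⟩⟩
    · exfalso
      push_neg at hbot
      obtain ⟨g, hgP, hg0⟩ := hbot
      have hXP := X_mem_of_all_const_zero hP hex (g : B[X]).natDegree g hgP hg0 le_rfl
      apply hne
      ext m
      rw [Subring.mem_compositeXIdeal]
      constructor
      · exact hex m
      · intro hm
        obtain ⟨t, ht⟩ := Polynomial.X_dvd_iff.mpr hm
        have h1 := xmul_mem hP hXP t
        have heq : (⟨Polynomial.X * t, xt_mem t⟩ : A.toSubring.composite) = m :=
          Subtype.ext ht.symm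
        rwa [heq] at h1
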